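/- Let A be a unipotent lower-triangular square matrix over ℤ[q, q^{-1}] indexed by a finite totally ordered set. Then there exists a unique pair (G, H) of matrices over ℤ[q,q^{-1}], indexed by the same set, with A = H·G, where H is lower-triangular unipotent (H_{YY} = 1, H_{YZ} = 0 unless Y ≥ Z) and invariant under the bar involution q ↦ q^{-1}, and G is unipotent lower-triangular with off-diagonal entries in qℤ[q]. -/

import Mathlib

open LaurentPolynomial

/-- The bar involution on `ℤ[q, q⁻¹]`, sending `q ↦ q⁻¹`. -/
noncomputable def bar : LaurentPolynomial ℤ →+* LaurentPolynomial ℤ :=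
  (invert : LaurentPolynomial ℤ ≃ₐ[ℤ] LaurentPolynomial ℤ)

namespace LLTaux

lemma bar_apply (f : LaurentPolynomial ℤ) (m : ℤ) : (bar f).coeff m = f.coeff (-m) := invert_apply f m

/-- the `q ℤ[q]` part of a Laurent polynomial -/
noncomputable def qpart (f : LaurentPolynomial ℤ) : LaurentPolynomial ℤ :=
  AddMonoidAlgebra.ofCoeff (Finsupp.filter (fun n => 0 < n) (f - LaurentPolynomial.invert f).coeff)

lemma qpart_apply (f : LaurentPolynomial ℤ) (m : ℤ) :
    (qpart f).coeff m = if 0 < m then f.coeff m - f.coeff (-m) else 0 := by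
  rw [qpart, AddMonoidAlgebra.coeff_ofCoeff, Finsupp.filter_apply]
  split
  · rw [AddMonoidAlgebra.coeff_sub, Finsupp.sub_apply, invert_apply]
  · rfl

lemma qpart_apply_nonpos (f : LaurentPolynomial ℤ) {m : ℤ} (hm : m ≤ 0) : (qpart f).coeff m = 0 := by
  rw [qpart_apply, if_neg (by omega)]

/-- the bar-invariant part -/
noncomputable def barpart (f : LaurentPolynomial ℤ) : LaurentPolynomial ℤ := f - qpart f

lemma barpart_add_qpart (f : LaurentPolynomial ℤ) : barpart f + qpart f = f := by
  rw [barpart]; exact sub_add_cancel f (qpart f)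

lemma bar_barpart (f : LaurentPolynomial ℤ) : bar (barpart f) = barpart f := by
  apply LaurentPolynomial.ext; intro m
  rw [bar_apply, barpart, AddMonoidAlgebra.coeff_sub, Finsupp.sub_apply, Finsupp.sub_apply, qpart_apply, qpart_apply]
  rcases lt_trichotomy m 0 with h | h | h
  · rw [if_neg (show ¬ (0:ℤ) < m by omega), if_pos (show (0:ℤ) < -m by omega)]; ring
  · subst h; simp
  · rw [if_pos h, if_neg (show ¬ (0:ℤ) < -m by omega)]; ring

lemma eq_zero_of_bar_inv (d : LaurentPolynomial ℤ) (h1 : bar d = d)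
    (h2 : ∀ m : ℤ, m ≤ 0 → d.coeff m = 0) : d = 0 := by
  apply LaurentPolynomial.ext; intro m
  rcases le_or_gt m 0 with h | h
  · simpa using h2 m h
  · have := congrArg (fun g : LaurentPolynomial ℤ => g.coeff m) h1
    simp only [bar_apply] at this
    rw [← this]
    simpa using h2 (-m) (by omega)

variable {n : Type*} [Fintype n] [LinearOrder n]

/-- strictly-between finset -/
def S (Z Y : n) : Finset n := Finset.univ.filter (fun W => Z < W ∧ W < Y)

lemma card_lt_left {Z Y W : n} (hW : W ∈ S Z Y) : (S W Y).card < (S Z Y).card := by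
  simp only [S, Finset.mem_filter, Finset.mem_univ, true_and] at hW
  apply Finset.card_lt_card
  constructor
  · intro x hx; simp only [S, Finset.mem_filter, Finset.mem_univ, true_and] at hx ⊢
    exact ⟨hW.1.trans hx.1, hx.2⟩
  · intro hsub
    have := hsub (by simp only [S, Finset.mem_filter, Finset.mem_univ, true_and]; exact hW)
    simp only [S, Finset.mem_filter, Finset.mem_univ, true_and] at this
    exact absurd this.1 (lt_irrefl W)

lemma card_lt_right {Z Y W : n} (hW : W ∈ S Z Y) : (S Z W).card < (S Z Y).card := by
  simp only [S, Finset.mem_filter, Finset.mem_univ, true_and] at hW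
  apply Finset.card_lt_card
  constructor
  · intro x hx; simp only [S, Finset.mem_filter, Finset.mem_univ, true_and] at hx ⊢
    exact ⟨hx.1, hx.2.trans hW.2⟩
  · intro hsub
    have := hsub (by simp only [S, Finset.mem_filter, Finset.mem_univ, true_and]; exact hW)
    simp only [S, Finset.mem_filter, Finset.mem_univ, true_and] at this
    exact absurd this.2 (lt_irrefl W)

/-- Simultaneous recursive construction of the pair `(H Y Z, G Y Z)`. -/
noncomputable def P (A : Matrix n n (LaurentPolynomial ℤ)) (Y Z : n) :
    LaurentPolynomial ℤ × LaurentPolynomial ℤ :=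
  if Y = Z then (1, 1)
  else if Y < Z then (0, 0)
  else
    let r := A Y Z - ∑ W ∈ (S Z Y).attach, (P A Y W.1).1 * (P A W.1 Z).2
    (barpart r, qpart r)
termination_by (S Z Y).card
decreasing_by
  · exact card_lt_left W.2
  · exact card_lt_right W.2

lemma P_diag (A : Matrix n n (LaurentPolynomial ℤ)) (Y : n) : P A Y Y = (1, 1) := by
  rw [P]; simp

lemma P_lt (A : Matrix n n (LaurentPolynomial ℤ)) {Y Z : n} (h : Y < Z) : P A Y Z = (0, 0) := by
  rw [P, if_neg (ne_of_lt h), if_pos h]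

lemma P_gt (A : Matrix n n (LaurentPolynomial ℤ)) {Y Z : n} (h : Z < Y) :
    P A Y Z = (barpart (A Y Z - ∑ W ∈ S Z Y, (P A Y W).1 * (P A W Z).2),
      qpart (A Y Z - ∑ W ∈ S Z Y, (P A Y W).1 * (P A W Z).2)) := by
  rw [P, if_neg h.ne', if_neg (not_lt.mpr h.le),
    Finset.sum_attach (S Z Y) (fun W => (P A Y W).1 * (P A W Z).2)]

/-- the triangular sum formula for the product of two triangular unipotent matrices -/
lemma mul_apply_of (H G : Matrix n n (LaurentPolynomial ℤ))
    (hH1 : ∀ Y, H Y Y = 1) (hH0 : ∀ Y Z, Y < Z → H Y Z = 0)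
    (hG1 : ∀ Y, G Y Y = 1) (hG0 : ∀ Y Z, Y < Z → G Y Z = 0)
    {Y Z : n} (h : Z < Y) :
    (H * G) Y Z = H Y Z + G Y Z + ∑ W ∈ S Z Y, H Y W * G W Z := by
  rw [Matrix.mul_apply]
  rw [← Finset.sum_subset (Finset.subset_univ (insert Z (insert Y (S Z Y))))]
  · have hZ : Z ∉ insert Y (S Z Y) := by
      intro hmem
      rcases Finset.mem_insert.mp hmem with h1 | h1
      · exact absurd h1 (ne_of_lt h)
      · simp only [S, Finset.mem_filter, Finset.mem_univ, true_and] at h1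
        exact absurd h1.1 (lt_irrefl Z)
    have hY : Y ∉ S Z Y := by
      simp only [S, Finset.mem_filter, Finset.mem_univ, true_and]
      intro h1; exact absurd h1.2 (lt_irrefl Y)
    rw [Finset.sum_insert hZ, Finset.sum_insert hY, hG1, hH1, mul_one, one_mul]
    ring
  · intro W _ hW
    by_cases hWY : Y < W
    · rw [hH0 Y W hWY, zero_mul]
    by_cases hWZ : W < Z
    · rw [hG0 W Z hWZ, mul_zero]
    exfalso
    apply hW
    simp only [Finset.mem_insert, S, Finset.mem_filter, Finset.mem_univ, true_and]
    push_neg at hWY hWZ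
    rcases eq_or_lt_of_le hWZ with h1 | h1
    · exact Or.inl h1.symm
    rcases eq_or_lt_of_le hWY with h2 | h2
    · exact Or.inr (Or.inl h2)
    · exact Or.inr (Or.inr ⟨h1, h2⟩)

end LLTaux

open LLTaux in
/-- The abstract linear algebra underlying the Lascoux–Leclerc–Thibon algorithm:
given any unipotent lower-triangular matrix `A` over `ℤ[q, q⁻¹]` indexed by a
finite totally ordered set (entries `A Y Z` vanish unless `Y ≥ Z`, diagonal
entries equal `1`), there is a unique pair `(H, G)` of matrices over
`ℤ[q, q⁻¹]` with `A = H * G`, where `H` is bar-invariant unipotent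
lower-triangular and `G` is unipotent lower-triangular with off-diagonal
entries in `q ℤ[q]` (i.e. all coefficients of `q^n` with `n ≤ 0` vanish). -/
theorem llt_bar_triangular_factorization
    {n : Type*} [Fintype n] [LinearOrder n]
    (A : Matrix n n (LaurentPolynomial ℤ))
    (hA1 : ∀ Y, A Y Y = 1) (hA0 : ∀ Y Z, Y < Z → A Y Z = 0) :
    ∃! HG : Matrix n n (LaurentPolynomial ℤ) × Matrix n n (LaurentPolynomial ℤ),
      A = HG.1 * HG.2 ∧
      (∀ Y, HG.1 Y Y = 1) ∧ (∀ Y Z, Y < Z → HG.1 Y Z = 0) ∧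
      (∀ Y Z, bar (HG.1 Y Z) = HG.1 Y Z) ∧
      (∀ Y, HG.2 Y Y = 1) ∧ (∀ Y Z, Y < Z → HG.2 Y Z = 0) ∧
      (∀ Y Z, Y ≠ Z → ∀ m : ℤ, m ≤ 0 → (HG.2 Y Z).coeff m = 0) := by
  classical
  set H : Matrix n n (LaurentPolynomial ℤ) := fun Y Z => (P A Y Z).1 with hH
  set G : Matrix n n (LaurentPolynomial ℤ) := fun Y Z => (P A Y Z).2 with hG
  have hH1 : ∀ Y, H Y Y = 1 := fun Y => by rw [hH]; simp [P_diag]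
  have hG1 : ∀ Y, G Y Y = 1 := fun Y => by rw [hG]; simp [P_diag]
  have hH0 : ∀ Y Z, Y < Z → H Y Z = 0 := fun Y Z h => by rw [hH]; simp [P_lt A h]
  have hG0 : ∀ Y Z, Y < Z → G Y Z = 0 := fun Y Z h => by rw [hG]; simp [P_lt A h]
  have hbar : ∀ Y Z, bar (H Y Z) = H Y Z := by
    intro Y Z
    rcases lt_trichotomy Y Z with h | h | h
    · rw [hH0 Y Z h]; simp
    · subst h; rw [hH1]; simp
    · rw [hH]; simp only [P_gt A h]; exact bar_barpart _
  have hq : ∀ Y Z, Y ≠ Z → ∀ m : ℤ, m ≤ 0 → (G Y Z).coeff m = 0 := by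
    intro Y Z hne m hm
    rcases lt_trichotomy Y Z with h | h | h
    · rw [hG0 Y Z h]; rfl
    · exact absurd h hne
    · rw [hG]; simp only [P_gt A h]; exact qpart_apply_nonpos _ hm
  have hmul : A = H * G := by
    apply Matrix.ext
    intro Y Z
    rcases lt_trichotomy Y Z with h | h | h
    · rw [hA0 Y Z h, Matrix.mul_apply]
      symm
      apply Finset.sum_eq_zero
      intro W _
      rcases le_or_gt W Y with h1 | h1
      · rw [hG0 W Z (lt_of_le_of_lt h1 h), mul_zero]
      · rw [hH0 Y W h1, zero_mul]
    · subst h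
      rw [hA1, Matrix.mul_apply, Finset.sum_eq_single Y]
      · rw [hH1, hG1, one_mul]
      · intro W _ hW
        rcases lt_or_gt_of_ne hW with h1 | h1
        · rw [hG0 W Y h1, mul_zero]
        · rw [hH0 Y W h1, zero_mul]
      · intro hmem; exact absurd (Finset.mem_univ Y) hmem
    · rw [mul_apply_of H G hH1 hH0 hG1 hG0 h]
      have hP := P_gt A h
      have h1 : H Y Z = barpart (A Y Z - ∑ W ∈ S Z Y, H Y W * G W Z) := by
        show (P A Y Z).1 = _
        rw [hP]
      have h2 : G Y Z = qpart (A Y Z - ∑ W ∈ S Z Y, H Y W * G W Z) := by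
        show (P A Y Z).2 = _
        rw [hP]
      rw [h1, h2, add_assoc, ← add_assoc (barpart _), barpart_add_qpart]
      ring
  refine ⟨(H, G), ⟨hmul, hH1, hH0, hbar, hG1, hG0, hq⟩, ?_⟩
  rintro ⟨H', G'⟩ ⟨hmul', hH1', hH0', hbar', hG1', hG0', hq'⟩
  dsimp only at hmul' hH1' hH0' hbar' hG1' hG0' hq' ⊢
  have key : ∀ k : ℕ, ∀ Y Z : n, (S Z Y).card = k → H' Y Z = H Y Z ∧ G' Y Z = G Y Z := by
    intro k
    induction k using Nat.strong_induction_on with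
    | _ k ih =>
      intro Y Z hk
      rcases lt_trichotomy Y Z with h | h | h
      · rw [hH0 Y Z h, hG0 Y Z h, hH0' Y Z h, hG0' Y Z h]; exact ⟨rfl, rfl⟩
      · subst h; rw [hH1, hG1, hH1', hG1']; exact ⟨rfl, rfl⟩
      · have hsum : ∑ W ∈ S Z Y, H' Y W * G' W Z = ∑ W ∈ S Z Y, H Y W * G W Z := by
          apply Finset.sum_congr rfl
          intro W hW
          have e1 := ih _ (hk ▸ card_lt_left hW) Y W rfl
          have e2 := ih _ (hk ▸ card_lt_right hW) W Z rfl
          rw [e1.1, e2.2]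
        have eq1 : H' Y Z + G' Y Z = H Y Z + G Y Z := by
          have c1 := mul_apply_of H' G' hH1' hH0' hG1' hG0' h
          have c2 := mul_apply_of H G hH1 hH0 hG1 hG0 h
          rw [← hmul'] at c1
          rw [← hmul] at c2
          rw [c2, hsum] at c1
          linear_combination -c1
        have hd2 : H' Y Z - H Y Z = G Y Z - G' Y Z := by linear_combination eq1
        have hdbar : bar (H' Y Z - H Y Z) = H' Y Z - H Y Z := by
          rw [map_sub, hbar' Y Z, hbar Y Z]
        have hdq : ∀ m : ℤ, m ≤ 0 → (H' Y Z - H Y Z).coeff m = 0 := by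
          intro m hm
          rw [hd2, AddMonoidAlgebra.coeff_sub, Finsupp.sub_apply, hq Y Z (ne_of_gt h) m hm, hq' Y Z (ne_of_gt h) m hm,
            sub_zero]
        have hd0 : H' Y Z - H Y Z = 0 := eq_zero_of_bar_inv _ hdbar hdq
        exact ⟨by linear_combination hd0, by linear_combination hd2 - hd0⟩
  have hHeq : H' = H := Matrix.ext fun Y Z => (key _ Y Z rfl).1
  have hGeq : G' = G := Matrix.ext fun Y Z => (key _ Y Z rfl).2
  rw [Prod.mk.injEq]
  exact ⟨hHeq, hGeq⟩
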